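/- Let m ≥ 1, let q ∈ R = MvPolynomial ℕ+ ℂ, and let N be at least m plus the weighted total degree of q (where the variable p_k has weight k). Then Δ_N(m · ∂q/∂p_m) − m · ∂(Δ_N(q))/∂p_m = −m · ( (1/2) Σ_{a=1}^{m−1} a(m−a) · (∂²q/∂p_a∂p_{m−a}) + Σ_{k=1}^{N} (m+k) · p_k · (∂q/∂p_{m+k}) ). (This is the commutator identity [Δ, a_m] = −m L_m between the operator Δ and the Heisenberg annihilation operator a_m = m ∂/∂p_m, where L_m is the Virasoro operator of degree −m.) -/

import Mathlib

open MvPolynomial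

/-- The polynomial ring `ℂ[p₁, p₂, …]` in variables indexed by the positive integers. -/
abbrev R : Type := MvPolynomial ℕ+ ℂ

/-- The truncated operator
`Δ_N q = (1/2) Σ_{i,j=1}^N ( i·j·p_{i+j}·∂²q/∂p_i∂p_j + (i+j)·p_i·p_j·∂q/∂p_{i+j} )`. -/
noncomputable def Δ (N : ℕ) (q : R) : R :=
  (1/2 : ℂ) • ∑ i ∈ Finset.Icc 1 N, ∑ j ∈ Finset.Icc 1 N,
    (((i : ℂ) * (j : ℂ)) •
        (X (i + j).toPNat' * pderiv i.toPNat' (pderiv j.toPNat' q))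
      + ((i + j : ℕ) : ℂ) •
        (X i.toPNat' * X j.toPNat' * pderiv (i + j).toPNat' q))

/-- The weighted total degree of `q`, where the variable `p_k` has weight `k`. -/
noncomputable def wdeg (q : R) : ℕ :=
  MvPolynomial.weightedTotalDegree (fun k : ℕ+ => (k : ℕ)) q

/-!
Since `∂_m` commutes with every `∂_i ∂_j`, the commutator of `m ∂_m` with the `(i, j)` summand of
`Δ_N` only sees `∂_m` hitting the coefficient monomials `p_{i+j}` and `p_i p_j` (Leibniz's rule).
What survives are the summands with `i + j = m`, which give the second-order part of `L_m`, and
those with `i = m` or `j = m`, which give the first-order part twice; `N ≥ m` guarantees that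
the latter occur in the truncated sum.
-/

theorem MvPolynomial.pderiv_pderiv_comm {σ S : Type*} [CommSemiring S] (i j : σ)
    (f : MvPolynomial σ S) : pderiv i (pderiv j f) = pderiv j (pderiv i f) := by
  classical
  induction f using MvPolynomial.induction_on with
  | C a => simp
  | add f g hf hg => simp [hf, hg]
  | mul_X f k hf =>
    simp only [pderiv_mul, map_add, pderiv_X, Pi.single_apply, hf]
    split_ifs <;> simp [add_right_comm]

theorem MvPolynomial.smul_mul_smul_pderiv_sub {σ S : Type*} [CommRing S] (m : σ) (a c : S)
    (P g : MvPolynomial σ S) :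
    c • (P * (a • pderiv m g)) - a • pderiv m (c • (P * g)) = -a • c • (pderiv m P * g) := by
  simp only [Derivation.map_smul, pderiv_mul]
  simp only [smul_eq_C_mul, map_neg]
  ring

theorem Nat.toPNat'_inj {a b : ℕ} (ha : 0 < a) (hb : 0 < b) :
    a.toPNat' = b.toPNat' ↔ a = b :=
  ⟨fun h => by rw [← PNat.toPNat'_coe ha, ← PNat.toPNat'_coe hb, h], congrArg _⟩

theorem pderiv_toPNat'_X {m k : ℕ} (hm : 0 < m) (hk : 0 < k) :
    pderiv m.toPNat' (X k.toPNat' : R) = if k = m then 1 else 0 := by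
  simp only [pderiv_X, Pi.single_apply, Nat.toPNat'_inj hk hm]

noncomputable def deltaSummand (i j : ℕ) (q : R) : R :=
  ((i : ℂ) * (j : ℂ)) • (X (i + j).toPNat' * pderiv i.toPNat' (pderiv j.toPNat' q))
    + ((i + j : ℕ) : ℂ) • (X i.toPNat' * X j.toPNat' * pderiv (i + j).toPNat' q)

theorem Δ_eq_sum_deltaSummand (N : ℕ) (q : R) :
    Δ N q = (1/2 : ℂ) • ∑ i ∈ Finset.Icc 1 N, ∑ j ∈ Finset.Icc 1 N, deltaSummand i j q :=
  rfl

theorem deltaSummand_smul_pderiv_sub {m i j : ℕ} (hm : 0 < m) (hi : 0 < i) (hj : 0 < j) (q : R) :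
    deltaSummand i j ((m : ℂ) • pderiv m.toPNat' q)
        - (m : ℂ) • pderiv m.toPNat' (deltaSummand i j q)
      = -(m : ℂ) •
        ((if i + j = m then ((i : ℂ) * j) • pderiv i.toPNat' (pderiv j.toPNat' q) else 0)
          + (if i = m then ((i + j : ℕ) : ℂ) • (X j.toPNat' * pderiv (i + j).toPNat' q) else 0)
          + (if j = m then ((i + j : ℕ) : ℂ) • (X i.toPNat' * pderiv (i + j).toPNat' q) else 0))
      := by
  have hij : pderiv i.toPNat' (pderiv j.toPNat' ((m : ℂ) • pderiv m.toPNat' q))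
      = (m : ℂ) • pderiv m.toPNat' (pderiv i.toPNat' (pderiv j.toPNat' q)) := by
    rw [Derivation.map_smul, Derivation.map_smul, pderiv_pderiv_comm j.toPNat',
      pderiv_pderiv_comm i.toPNat']
  have hk : pderiv (i + j).toPNat' ((m : ℂ) • pderiv m.toPNat' q)
      = (m : ℂ) • pderiv m.toPNat' (pderiv (i + j).toPNat' q) := by
    rw [Derivation.map_smul, pderiv_pderiv_comm]
  rw [deltaSummand, deltaSummand, hij, hk, map_add, smul_add, add_sub_add_comm,
    smul_mul_smul_pderiv_sub, smul_mul_smul_pderiv_sub, pderiv_mul,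
    pderiv_toPNat'_X hm hi, pderiv_toPNat'_X hm hj, pderiv_toPNat'_X hm (by omega)]
  split_ifs <;> simp only [smul_eq_C_mul] <;> ring

theorem Finset.sum_Icc_sum_Icc_ite_add_eq {M : Type*} [AddCommMonoid M] {m N : ℕ} (hmN : m ≤ N)
    (f : ℕ → ℕ → M) :
    ∑ i ∈ Icc 1 N, ∑ j ∈ Icc 1 N, (if i + j = m then f i j else 0)
      = ∑ a ∈ Icc 1 (m - 1), f a (m - a) := by
  calc _ = ∑ i ∈ Icc 1 N, if i ∈ Icc 1 (m - 1) then f i (m - i) else 0 := by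
        refine sum_congr rfl fun i hi => ?_
        rw [mem_Icc] at hi
        by_cases him : i < m
        · rw [sum_eq_single_of_mem (m - i) (by simp; omega) fun j _ hj => if_neg (by omega),
            if_pos (by omega), if_pos (by simp; omega)]
        · rw [sum_eq_zero fun j hj => if_neg (by simp at hj; omega), if_neg (by simp; omega)]
    _ = _ := by rw [sum_ite_mem, inter_eq_right.mpr (Icc_subset_Icc_right (by omega))]

theorem Δ_smul_pderiv_sub (N m : ℕ) (q : R) :
    Δ N ((m : ℂ) • pderiv m.toPNat' q) - (m : ℂ) • pderiv m.toPNat' (Δ N q)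
      = (1/2 : ℂ) • ∑ i ∈ Finset.Icc 1 N, ∑ j ∈ Finset.Icc 1 N,
          (deltaSummand i j ((m : ℂ) • pderiv m.toPNat' q)
            - (m : ℂ) • pderiv m.toPNat' (deltaSummand i j q)) := by
  simp only [Δ_eq_sum_deltaSummand, Derivation.map_smul, map_sum, Finset.smul_sum,
    Finset.sum_sub_distrib, smul_sub, smul_comm (m : ℂ) (1/2 : ℂ)]

theorem delta_comm_annihilation (m : ℕ) (hm : 1 ≤ m) (q : R) (N : ℕ)
    (hN : m + wdeg q ≤ N) :
    Δ N ((m : ℂ) • pderiv m.toPNat' q) - (m : ℂ) • pderiv m.toPNat' (Δ N q)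
      = -(m : ℂ) •
          ((1/2 : ℂ) • ∑ a ∈ Finset.Icc 1 (m - 1),
              ((a * (m - a) : ℕ) : ℂ) •
                pderiv a.toPNat' (pderiv (m - a).toPNat' q)
            + ∑ k ∈ Finset.Icc 1 N,
              ((m + k : ℕ) : ℂ) • (X k.toPNat' * pderiv (m + k).toPNat' q)) := by
  have hmN : m ≤ N := (Nat.le_add_right m _).trans hN
  have hmem : m ∈ Finset.Icc 1 N := Finset.mem_Icc.2 ⟨hm, hmN⟩
  rw [Δ_smul_pderiv_sub,
    Finset.sum_congr rfl fun i hi => Finset.sum_congr rfl fun j hj =>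
      deltaSummand_smul_pderiv_sub (by omega) (Finset.mem_Icc.1 hi).1 (Finset.mem_Icc.1 hj).1 q]
  simp only [← Finset.smul_sum, Finset.sum_add_distrib, Finset.sum_ite_irrel,
    Finset.sum_const_zero, Finset.sum_ite_eq', if_pos hmem, Finset.sum_Icc_sum_Icc_ite_add_eq hmN]
  simp only [Nat.add_comm _ m, Nat.cast_mul]
  module
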